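/- arXiv:2511.19249 — 5 statements merged into one kernel-verified Lean document; each statement's English description precedes it below -/
import Mathlib

section
/- Let s : ℕ → ℕ satisfy s(1) = 0 and, for every N ≥ 2, s(N) ≤ max over 1 ≤ N' ≤ N-1 of (s(N') + s(N-N') + min(N', N-N')). Then for all N ≥ 1, s(N) ≤ (N/2) · log₂ N (i.e., 2·s(N) ≤ N · log₂ N, using real-valued logarithm). -/
lemma log_one_add_ge (t : ℝ) (h0 : 0 ≤ t) (h1 : t ≤ 1) :
    t * Real.log 2 ≤ Real.log (1 + t) := by
  have hc := strictConcaveOn_log_Ioi.concaveOn.2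
    (show (1:ℝ) ∈ Set.Ioi (0:ℝ) by norm_num) (show (2:ℝ) ∈ Set.Ioi (0:ℝ) by norm_num)
    (show (0:ℝ) ≤ 1 - t by linarith) h0 (by ring)
  simp only [smul_eq_mul, Real.log_one, mul_zero, zero_add] at hc
  have : (1 - t) * 1 + t * 2 = 1 + t := by ring
  rwa [this] at hc

lemma key_ineq (a b : ℝ) (ha : 1 ≤ a) (hab : a ≤ b) :
    a * Real.logb 2 a + b * Real.logb 2 b + 2 * a ≤ (a + b) * Real.logb 2 (a + b) := by
  have ha0 : 0 < a := by linarith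
  have hb0 : 0 < b := by linarith
  have hN0 : 0 < a + b := by linarith
  -- part 1 : a * logb2 (a+b) ≥ a * logb2 a + a
  have h2a : Real.logb 2 (2 * a) = 1 + Real.logb 2 a := by
    rw [Real.logb_mul (by norm_num) (ne_of_gt ha0)]
    simp [Real.logb_self_eq_one]
  have hmono : Real.logb 2 (2 * a) ≤ Real.logb 2 (a + b) :=
    Real.logb_le_logb_of_le (by norm_num) (by linarith) (by linarith)
  have part1 : a * Real.logb 2 a + a ≤ a * Real.logb 2 (a + b) := by
    have := mul_le_mul_of_nonneg_left hmono (le_of_lt ha0)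
    rw [h2a] at this
    nlinarith
  -- part 2 : b * logb2 (a+b) ≥ b * logb2 b + a
  have hsplit : Real.logb 2 (a + b) = Real.logb 2 b + Real.logb 2 (1 + a / b) := by
    rw [← Real.logb_mul (ne_of_gt hb0) (by positivity)]
    congr 1
    field_simp
    ring
  have hlog : a / b ≤ Real.logb 2 (1 + a / b) := by
    have h0 : 0 ≤ a / b := by positivity
    have h1 : a / b ≤ 1 := (div_le_one hb0).2 hab
    have := log_one_add_ge (a / b) h0 h1
    rw [Real.logb, le_div_iff₀ (Real.log_pos (by norm_num))]
    linarith
  have part2 : b * Real.logb 2 b + a ≤ b * Real.logb 2 (a + b) := by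
    rw [hsplit]
    have := mul_le_mul_of_nonneg_left hlog (le_of_lt hb0)
    rw [mul_div_cancel₀ a (ne_of_gt hb0)] at this
    nlinarith
  nlinarith

/-- If `s 1 = 0` and for every `N ≥ 2`, `s N` is at most the maximum over
`1 ≤ N' ≤ N-1` of `s N' + s (N - N') + min N' (N - N')`, then
`2 * s N ≤ N * log₂ N` for all `N ≥ 1`. -/
theorem stitched_transform_count_bound (s : ℕ → ℕ)
    (h1 : s 1 = 0)
    (hrec : ∀ N, 2 ≤ N →
      s N ≤ (Finset.Icc 1 (N - 1)).sup (fun N' => s N' + s (N - N') + min N' (N - N'))) :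
    ∀ N, 1 ≤ N → (2 * s N : ℝ) ≤ (N : ℝ) * Real.logb 2 N := by
  intro N
  induction N using Nat.strong_induction_on with
  | _ N ih =>
    intro hN1
    rcases eq_or_lt_of_le hN1 with h | h
    · rw [← h]; simp [h1]
    · have hN2 : 2 ≤ N := h
      have hne : (Finset.Icc 1 (N - 1)).Nonempty := by
        rw [Finset.nonempty_Icc]; omega
      obtain ⟨A, hAmem, hsup⟩ := Finset.exists_mem_eq_sup _ hne
        (fun N' => s N' + s (N - N') + min N' (N - N'))
      rw [Finset.mem_Icc] at hAmem
      set B := N - A with hB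
      have hA1 : 1 ≤ A := hAmem.1
      have hAN : A ≤ N - 1 := hAmem.2
      have hB1 : 1 ≤ B := by omega
      have hAltN : A < N := by omega
      have hBltN : B < N := by omega
      have hABN : A + B = N := by omega
      have hsN : s N ≤ s A + s B + min A B := by
        have := hrec N hN2
        rw [hsup] at this
        exact this
      have ihA := ih A hAltN hA1
      have ihB := ih B hBltN hB1
      have hcast : ((A : ℝ) + B) = N := by exact_mod_cast congrArg (Nat.cast : ℕ → ℝ) hABN
      have hstep : (2 * s N : ℝ) ≤ 2 * s A + 2 * s B + 2 * min (A:ℝ) (B:ℝ) := by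
        have : (s N : ℝ) ≤ ((s A + s B + min A B : ℕ) : ℝ) := by exact_mod_cast hsN
        push_cast at this
        linarith
      rcases le_total A B with hAB | hAB
      · have hk := key_ineq (A : ℝ) (B : ℝ) (by exact_mod_cast hA1) (by exact_mod_cast hAB)
        have hmin : min (A:ℝ) (B:ℝ) = (A : ℝ) := min_eq_left (by exact_mod_cast hAB)
        rw [hcast] at hk
        rw [hmin] at hstep
        linarith
      · have hk := key_ineq (B : ℝ) (A : ℝ) (by exact_mod_cast hB1) (by exact_mod_cast hAB)
        have hmin : min (A:ℝ) (B:ℝ) = (B : ℝ) := min_eq_right (by exact_mod_cast hAB)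
        rw [show (B : ℝ) + A = (A : ℝ) + B by ring, hcast] at hk
        rw [hmin] at hstep
        linarith
end

section
/- Let G', G'' be k'×n' and k''×n'' matrices over 𝔽₂ with coset spectra D'_i = d(g'^{(i)}, span{g'^{(i+1)},...,g'^{(k')}}) and D''_i defined analogously. Form the right-stitched generator matrix G = [[G', 0],[P, G'']] where every row of P equals the corresponding row of G'' restricted to a column subset that repeats each coordinate of G'' exactly once (the case N' ≥ N'' with P_{[N''],Γ''} = G'' and zero elsewhere). Then the coset spectrum D of G satisfies D_i = D'_i for i ≤ k' and D_i = 2·D''_{i-k'} for i > k'. -/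
/-!
Let `Q` scatter a word of length `N''` onto the columns `γ` (zero elsewhere), an isometry for
the Hamming distance. The rows of `G` are `(g'ⱼ, 0)` and `(Q g''ₗ, g''ₗ)`, and
`stitch γ : x ↦ (Q x, x)` doubles Hamming distances. The rows after a bottom row span the image
of the corresponding span for `G''`, whence the factor `2`. A word after a top row has the form
`(a + Q b, b)` with `a` in the span of the later rows of `G'`, and its distance to `(g'ᵢ, 0)` is
`d(g'ᵢ, a + Q b) + |Q b| ≥ d(g'ᵢ, a)`, with equality for `b = 0`.
-/

open Matrix

/-- The coset spectrum entry `D_i` of a matrix `G` over `𝔽₂`: the minimum Hamming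
distance from the `i`-th row to the span of the later rows. -/
noncomputable def cosetD {k n : ℕ} (G : Matrix (Fin k) (Fin n) (ZMod 2)) (i : Fin k) : ℕ :=
  sInf ((fun w => hammingDist (G i) w) ''
    ((Submodule.span (ZMod 2) {v : Fin n → ZMod 2 | ∃ j, i < j ∧ v = G j} :
        Submodule (ZMod 2) (Fin n → ZMod 2)) : Set (Fin n → ZMod 2)))

open Function

theorem Function.Injective.eq_extend_zero {β ι η : Type*} [Zero β] {γ : ι → η}
    (hγ : Injective γ) {v : η → β} {x : ι → β} (hv : ∀ l, v (γ l) = x l)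
    (hv₀ : ∀ j, (∀ l, γ l ≠ j) → v j = 0) :
    v = extend γ x 0 := by
  ext j
  by_cases hj : ∃ l, γ l = j
  · obtain ⟨l, rfl⟩ := hj
    rw [hγ.extend_apply, hv]
  · rw [extend_apply' _ _ _ hj, hv₀ j (not_exists.1 hj), Pi.zero_apply]

section Hamming

variable {β ι η : Type*} [Fintype ι] [Fintype η] [DecidableEq β] {m n : ℕ}

theorem hammingDist_append (x x' : Fin m → β) (y y' : Fin n → β) :
    hammingDist (Fin.append x y) (Fin.append x' y') = hammingDist x x' + hammingDist y y' := by
  simp only [hammingDist, Finset.card_filter, Fin.sum_univ_add, Fin.append_left, Fin.append_right]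

theorem hammingDist_extend_zero [Zero β] {γ : ι → η} (hγ : Injective γ) (x y : ι → β) :
    hammingDist (extend γ x 0) (extend γ y 0) = hammingDist x y := by
  classical
  have hsupp : ({j | extend γ x 0 j ≠ extend γ y 0 j} : Finset η)
      = Finset.image γ {l | x l ≠ y l} := by
    ext j
    by_cases hj : ∃ l, γ l = j
    · obtain ⟨l, rfl⟩ := hj
      simp [hγ.extend_apply, hγ.eq_iff]
    · simp_all [extend_apply']
  rw [hammingDist, hammingDist, hsupp, Finset.card_image_of_injective _ hγ]

end Hamming

section Stitch

variable (R : Type*) [Semiring R]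

def Fin.appendLinearMap (m n : ℕ) :
    (Fin m → R) × (Fin n → R) →ₗ[R] Fin (m + n) → R where
  toFun x := Fin.append x.1 x.2
  map_add' x y := by
    ext j
    refine Fin.addCases (fun j => ?_) (fun j => ?_) j <;> simp
  map_smul' c x := by
    ext j
    refine Fin.addCases (fun j => ?_) (fun j => ?_) j <;> simp

variable {m n : ℕ}

@[simp] theorem Fin.appendLinearMap_apply (x : (Fin m → R) × (Fin n → R)) :
    Fin.appendLinearMap R m n x = Fin.append x.1 x.2 := rfl

noncomputable def stitch (γ : Fin n → Fin m) : (Fin n → R) →ₗ[R] Fin (m + n) → R :=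
  (Fin.appendLinearMap R m n).comp ((ExtendByZero.linearMap R γ).prod LinearMap.id)

variable {R} {γ : Fin n → Fin m}

theorem stitch_apply (x : Fin n → R) : stitch R γ x = Fin.append (extend γ x 0) x := rfl

theorem hammingDist_stitch [DecidableEq R] (hγ : Injective γ) (x y : Fin n → R) :
    hammingDist (stitch R γ x) (stitch R γ y) = 2 * hammingDist x y := by
  rw [stitch_apply, stitch_apply, hammingDist_append, hammingDist_extend_zero hγ, two_mul]

end Stitch

theorem hammingDist_le_hammingDist_append_add_stitch {R : Type*} [Ring R] [DecidableEq R]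
    {m n : ℕ} {γ : Fin n → Fin m} (hγ : Injective γ) (x a : Fin m → R) (b : Fin n → R) :
    hammingDist x a ≤ hammingDist (Fin.append x 0) (Fin.append a 0 + stitch R γ b) := by
  have hsum : Fin.append a 0 + stitch R γ b = Fin.append (a + extend γ b 0) b := by
    rw [stitch_apply, ← Fin.appendLinearMap_apply R (a, 0),
      ← Fin.appendLinearMap_apply R (_, b), ← map_add, Prod.mk_add_mk, zero_add,
      Fin.appendLinearMap_apply]
  have hnorm : hammingDist a (a + extend γ b 0) = hammingDist 0 b := by
    rw [hammingDist_eq_hammingNorm, neg_add_cancel_left, ← hammingDist_zero_right,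
      hammingDist_comm 0 b, ← hammingDist_extend_zero hγ b 0, extend_zero]
  rw [hsum, hammingDist_append, ← hnorm]
  exact hammingDist_triangle_right _ _ _

theorem Fin.castAdd_lt_natAdd {m n : ℕ} (i : Fin m) (j : Fin n) : castAdd n i < natAdd m j :=
  Fin.lt_def.2 (by simp only [Fin.val_castAdd, Fin.val_natAdd]; omega)

section LaterSpan

variable {R : Type*} [Semiring R] {k k' k'' n n' : ℕ}

def laterSpan (G : Matrix (Fin k) (Fin n) R) (i : Fin k) : Submodule R (Fin n → R) :=
  Submodule.span R {v | ∃ j, i < j ∧ v = G j}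

theorem laterSpan_natAdd_eq_map {G : Matrix (Fin (k' + k'')) (Fin n) R}
    {H : Matrix (Fin k'') (Fin n') R} (f : (Fin n' → R) →ₗ[R] Fin n → R)
    (hG : ∀ l, G (Fin.natAdd k' l) = f (H l)) (i : Fin k'') :
    laterSpan G (Fin.natAdd k' i) = (laterSpan H i).map f := by
  rw [laterSpan, laterSpan, Submodule.map_span]
  congr 1
  ext v
  constructor
  · rintro ⟨j, hij, rfl⟩
    induction j using Fin.addCases with
    | left j => exact absurd hij (Fin.castAdd_lt_natAdd j i).not_gt
    | right l => exact ⟨H l, ⟨l, (Fin.natAdd_lt_natAdd_iff k').1 hij, rfl⟩, (hG l).symm⟩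
  · rintro ⟨_, ⟨l, hil, rfl⟩, rfl⟩
    exact ⟨Fin.natAdd k' l, (Fin.natAdd_lt_natAdd_iff k').2 hil, (hG l).symm⟩

theorem laterSpan_castAdd_eq_sup {G : Matrix (Fin (k' + k'')) (Fin n) R}
    {T : Matrix (Fin k') (Fin n') R} {B : Matrix (Fin k'') (Fin n'') R}
    (f : (Fin n' → R) →ₗ[R] Fin n → R) (g : (Fin n'' → R) →ₗ[R] Fin n → R)
    (hT : ∀ j, G (Fin.castAdd k'' j) = f (T j)) (hB : ∀ l, G (Fin.natAdd k' l) = g (B l))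
    (i : Fin k') :
    laterSpan G (Fin.castAdd k'' i) =
      (laterSpan T i).map f ⊔ (Submodule.span R (Set.range B)).map g := by
  rw [laterSpan, laterSpan, Submodule.map_span, Submodule.map_span, ← Submodule.span_union]
  congr 1
  ext v
  constructor
  · rintro ⟨j, hij, rfl⟩
    induction j using Fin.addCases with
    | left j =>
      exact Or.inl ⟨T j, ⟨j, (Fin.strictMono_castAdd k'').lt_iff_lt.1 hij, rfl⟩,
        (hT j).symm⟩
    | right l => exact Or.inr ⟨B l, ⟨l, rfl⟩, (hB l).symm⟩
  · rintro (⟨_, ⟨j, hij, rfl⟩, rfl⟩ | ⟨_, ⟨l, rfl⟩, rfl⟩)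
    · exact ⟨Fin.castAdd k'' j, (Fin.strictMono_castAdd k'').lt_iff_lt.2 hij, (hT j).symm⟩
    · exact ⟨Fin.natAdd k' l, Fin.castAdd_lt_natAdd i l, (hB l).symm⟩

end LaterSpan

section CosetSpectrum

variable {k k' k'' n n' n'' : ℕ}

theorem cosetD_eq (G : Matrix (Fin k) (Fin n) (ZMod 2)) (i : Fin k) :
    cosetD G i = sInf (hammingDist (G i) '' (laterSpan G i : Set (Fin n → ZMod 2))) := rfl

theorem cosetD_le {G : Matrix (Fin k) (Fin n) (ZMod 2)} {i : Fin k} {w : Fin n → ZMod 2}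
    (hw : w ∈ laterSpan G i) : cosetD G i ≤ hammingDist (G i) w :=
  (cosetD_eq G i).symm ▸ Nat.sInf_le (Set.mem_image_of_mem _ hw)

theorem exists_hammingDist_eq_cosetD (G : Matrix (Fin k) (Fin n) (ZMod 2)) (i : Fin k) :
    ∃ w ∈ laterSpan G i, hammingDist (G i) w = cosetD G i :=
  Nat.sInf_mem (Set.image_nonempty.2 ⟨0, (laterSpan G i).zero_mem⟩)

theorem le_cosetD_iff {G : Matrix (Fin k) (Fin n) (ZMod 2)} {i : Fin k} {d : ℕ} :
    d ≤ cosetD G i ↔ ∀ w ∈ laterSpan G i, d ≤ hammingDist (G i) w := by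
  refine ⟨fun h w hw => h.trans (cosetD_le hw), fun h => ?_⟩
  obtain ⟨w, hw, hdw⟩ := exists_hammingDist_eq_cosetD G i
  exact hdw ▸ h w hw

theorem cosetD_natAdd_eq_two_mul {G : Matrix (Fin (k' + k'')) (Fin (n' + n'')) (ZMod 2)}
    {G'' : Matrix (Fin k'') (Fin n'') (ZMod 2)} {γ : Fin n'' → Fin n'} (hγ : Injective γ)
    (hB : ∀ l, G (Fin.natAdd k' l) = stitch (ZMod 2) γ (G'' l)) (i : Fin k'') :
    cosetD G (Fin.natAdd k' i) = 2 * cosetD G'' i := by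
  have hspan := laterSpan_natAdd_eq_map _ hB i
  apply le_antisymm
  · obtain ⟨b, hb, hdb⟩ := exists_hammingDist_eq_cosetD G'' i
    have := cosetD_le (hspan ▸ Submodule.mem_map_of_mem hb)
    rwa [hB, hammingDist_stitch hγ, hdb] at this
  · rw [le_cosetD_iff, hspan]
    rintro _ ⟨b, hb, rfl⟩
    rw [hB, hammingDist_stitch hγ]
    exact Nat.mul_le_mul_left 2 (cosetD_le hb)

theorem cosetD_castAdd_eq {G : Matrix (Fin (k' + k'')) (Fin (n' + n'')) (ZMod 2)}
    {G' : Matrix (Fin k') (Fin n') (ZMod 2)} {G'' : Matrix (Fin k'') (Fin n'') (ZMod 2)}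
    {γ : Fin n'' → Fin n'} (hγ : Injective γ)
    (hT : ∀ j, G (Fin.castAdd k'' j) = Fin.append (G' j) 0)
    (hB : ∀ l, G (Fin.natAdd k' l) = stitch (ZMod 2) γ (G'' l)) (i : Fin k') :
    cosetD G (Fin.castAdd k'' i) = cosetD G' i := by
  let ι := (Fin.appendLinearMap (ZMod 2) n' n'').comp (LinearMap.inl (ZMod 2) _ _)
  have hspan := laterSpan_castAdd_eq_sup ι _ hT hB i
  apply le_antisymm
  · obtain ⟨a, ha, hda⟩ := exists_hammingDist_eq_cosetD G' i
    have := cosetD_le (hspan ▸ Submodule.mem_sup_left (Submodule.mem_map_of_mem (f := ι) ha))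
    rwa [hT, LinearMap.comp_apply, LinearMap.inl_apply, Fin.appendLinearMap_apply,
      hammingDist_append, hammingDist_self, add_zero, hda] at this
  · rw [le_cosetD_iff, hspan]
    intro w hw
    obtain ⟨_, ⟨a, ha, rfl⟩, _, ⟨b, -, rfl⟩, rfl⟩ := Submodule.mem_sup.1 hw
    rw [hT]
    exact (cosetD_le ha).trans (hammingDist_le_hammingDist_append_add_stitch hγ _ _ _)

end CosetSpectrum

section Blocks

variable {α : Type*} {k' k'' n' n'' : ℕ}

variable (A : Matrix (Fin k') (Fin n') α) (B : Matrix (Fin k') (Fin n'') α)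
  (C : Matrix (Fin k'') (Fin n') α) (D : Matrix (Fin k'') (Fin n'') α)

theorem reindex_fromBlocks_castAdd (j : Fin k') :
    reindex finSumFinEquiv finSumFinEquiv (fromBlocks A B C D) (Fin.castAdd k'' j) =
      Fin.append (A j) (B j) := by
  ext c
  refine Fin.addCases (fun c => ?_) (fun c => ?_) c <;> simp

theorem reindex_fromBlocks_natAdd (l : Fin k'') :
    reindex finSumFinEquiv finSumFinEquiv (fromBlocks A B C D) (Fin.natAdd k' l) =
      Fin.append (C l) (D l) := by
  ext c
  refine Fin.addCases (fun c => ?_) (fun c => ?_) c <;> simp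

end Blocks

theorem right_stitched_coset_spectrum_ge_general (N' N'' : ℕ)
    (G' : Matrix (Fin N') (Fin N') (ZMod 2))
    (G'' : Matrix (Fin N'') (Fin N'') (ZMod 2))
    (γ : Fin N'' → Fin N') (hγ : Function.Injective γ)
    (P : Matrix (Fin N'') (Fin N') (ZMod 2))
    (hP : ∀ i l, P i (γ l) = G'' i l)
    (hP0 : ∀ i j, (∀ l, γ l ≠ j) → P i j = 0) :
    let G : Matrix (Fin (N' + N'')) (Fin (N' + N'')) (ZMod 2) :=
      Matrix.reindex finSumFinEquiv finSumFinEquiv (Matrix.fromBlocks G' 0 P G'')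
    (∀ i : Fin N', cosetD G (Fin.castAdd N'' i) = cosetD G' i) ∧
    (∀ i : Fin N'', cosetD G (Fin.natAdd N' i) = 2 * cosetD G'' i) := by
  intro G
  have hPext (l : Fin N'') : P l = extend γ (G'' l) 0 := hγ.eq_extend_zero (hP l) (hP0 l)
  have hB : ∀ l, G (Fin.natAdd N' l) = stitch (ZMod 2) γ (G'' l) := fun l =>
    (reindex_fromBlocks_natAdd G' 0 P G'' l).trans (by rw [hPext, stitch_apply])
  exact ⟨cosetD_castAdd_eq hγ (reindex_fromBlocks_castAdd _ _ _ _) hB,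
    cosetD_natAdd_eq_two_mul hγ hB⟩

/-- Lemma 4 (right-stitched polar codes, `N' ≥ N''`): with
`G = [[G',0],[P,G'']]` where `P` places the rows of `G''` on an injective column
subset `Γ''` of `[N']` and is zero elsewhere, the coset spectrum of `G` satisfies
`D_i = D'_i` for `i ≤ N'` and `D_i = 2·D''_{i-N'}` for `i > N'`. -/
theorem right_stitched_coset_spectrum_ge (N' N'' : ℕ) (hle : N'' ≤ N')
    (G' : Matrix (Fin N') (Fin N') (ZMod 2))
    (G'' : Matrix (Fin N'') (Fin N'') (ZMod 2))
    (γ : Fin N'' → Fin N') (hγ : Function.Injective γ)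
    (P : Matrix (Fin N'') (Fin N') (ZMod 2))
    (hP : ∀ i l, P i (γ l) = G'' i l)
    (hP0 : ∀ i j, (∀ l, γ l ≠ j) → P i j = 0) :
    let G : Matrix (Fin (N' + N'')) (Fin (N' + N'')) (ZMod 2) :=
      Matrix.reindex finSumFinEquiv finSumFinEquiv (Matrix.fromBlocks G' 0 P G'')
    (∀ i : Fin N', cosetD G (Fin.castAdd N'' i) = cosetD G' i) ∧
    (∀ i : Fin N'', cosetD G (Fin.natAdd N' i) = 2 * cosetD G'' i) :=
  right_stitched_coset_spectrum_ge_general N' N'' G' G'' γ hγ P hP hP0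
end

section
/- Let G' (size N'×N') and G'' (size N''×N'') be matrices over 𝔽₂ with coset spectra D' and D''. Consider the left-stitched construction: positions γ₁ < ... < γ_{N'} in [N''], Γ₁ = {γ_t + t - 1 : t ∈ [N']}, Γ₂ = {γ_t + t : t ∈ [N']}, N = N' + N'', and the N×N matrix G with G_{Γ₁,Γ₁} = G', G_{[N]\Γ₁,[N]\Γ₁} = G'', G_{Γ₁,[N]\Γ₁} = 0, G_{Γ₂,Γ₁} = G', G_{[N]\(Γ₁∪Γ₂),Γ₁} = 0. Then the coset spectrum D of G satisfies: D_{γ_t+t-1} = min(D'_t, D''_{γ_t}), D_{γ_t+t} = D'_t + D''_{γ_t}, and D_i = D''_j for all other i, where j = i − |{k ∈ Γ₁ : k < i}|. -/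
open Matrix

section Aux

lemma nat_sInf_union {A B : Set ℕ} (hA : A.Nonempty) (hB : B.Nonempty) :
    sInf (A ∪ B) = min (sInf A) (sInf B) := by
  apply le_antisymm
  · rcases le_total (sInf A) (sInf B) with h | h
    · rw [min_eq_left h]
      exact Nat.sInf_le (Set.mem_union_left _ (Nat.sInf_mem hA))
    · rw [min_eq_right h]
      exact Nat.sInf_le (Set.mem_union_right _ (Nat.sInf_mem hB))
  · rcases Nat.sInf_mem (hA.mono Set.subset_union_left) with h | h
    · exact le_trans (min_le_left _ _) (Nat.sInf_le h)
    · exact le_trans (min_le_right _ _) (Nat.sInf_le h)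

lemma nat_sInf_image2_add {A B : Set ℕ} (hA : A.Nonempty) (hB : B.Nonempty) :
    sInf (Set.image2 (· + ·) A B) = sInf A + sInf B := by
  apply le_antisymm
  · exact Nat.sInf_le (Set.mem_image2_of_mem (Nat.sInf_mem hA) (Nat.sInf_mem hB))
  · have hne : (Set.image2 (· + ·) A B).Nonempty := hA.image2 hB
    obtain ⟨a, ha, b, hb, hab⟩ := Nat.sInf_mem hne
    rw [← hab]
    exact Nat.add_le_add (Nat.sInf_le ha) (Nat.sInf_le hb)

lemma dist_image_prod {m m' : ℕ} (a : Fin m → ZMod 2) (b : Fin m' → ZMod 2)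
    (W : Submodule (ZMod 2) (Fin m → ZMod 2)) (W' : Submodule (ZMod 2) (Fin m' → ZMod 2)) :
    sInf ((fun p : (Fin m → ZMod 2) × (Fin m' → ZMod 2) =>
        hammingDist a p.1 + hammingDist b p.2) '' ((W.prod W' : Submodule (ZMod 2) _) : Set _))
      = sInf ((fun w => hammingDist a w) '' W) + sInf ((fun w => hammingDist b w) '' W') := by
  have himg : ((fun p : (Fin m → ZMod 2) × (Fin m' → ZMod 2) =>
      hammingDist a p.1 + hammingDist b p.2) '' ((W.prod W' : Submodule (ZMod 2) _) : Set _))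
      = Set.image2 (· + ·) ((fun w => hammingDist a w) '' W)
          ((fun w => hammingDist b w) '' W') := by
    ext n
    constructor
    · rintro ⟨p, hp, rfl⟩
      rw [SetLike.mem_coe, Submodule.mem_prod] at hp
      exact ⟨_, ⟨p.1, hp.1, rfl⟩, _, ⟨p.2, hp.2, rfl⟩, rfl⟩
    · rintro ⟨x, ⟨u, hu, rfl⟩, y, ⟨w, hw, rfl⟩, rfl⟩
      exact ⟨(u, w), by rw [SetLike.mem_coe, Submodule.mem_prod]; exact ⟨hu, hw⟩, rfl⟩
  rw [himg]
  exact nat_sInf_image2_add ⟨_, ⟨0, W.zero_mem, rfl⟩⟩ ⟨_, ⟨0, W'.zero_mem, rfl⟩⟩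

lemma sInf_dist_zero {m : ℕ} (W : Submodule (ZMod 2) (Fin m → ZMod 2)) :
    sInf ((fun w => hammingDist (0 : Fin m → ZMod 2) w) '' W) = 0 :=
  Nat.sInf_eq_zero.mpr (Or.inl ⟨0, W.zero_mem, hammingDist_self 0⟩)

lemma prod_le_span {R M M' : Type*} [CommRing R] [AddCommGroup M] [AddCommGroup M']
    [Module R M] [Module R M'] (A : Set M) (B : Set M') (M0 : Submodule R (M × M'))
    (h1 : ∀ u ∈ A, ((u, 0) : M × M') ∈ M0) (h2 : ∀ w ∈ B, ((0, w) : M × M') ∈ M0) :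
    (Submodule.span R A).prod (Submodule.span R B) ≤ M0 := by
  rintro ⟨p1, p2⟩ hp
  rw [Submodule.mem_prod] at hp
  have key1 : ∀ u ∈ Submodule.span R A, ((u, 0) : M × M') ∈ M0 := by
    intro u hu
    induction hu using Submodule.span_induction with
    | mem x hx => exact h1 x hx
    | zero => exact M0.zero_mem
    | add x y _ _ hx hy => simpa using M0.add_mem hx hy
    | smul c x _ hx => simpa using M0.smul_mem c hx
  have key2 : ∀ w ∈ Submodule.span R B, ((0, w) : M × M') ∈ M0 := by
    intro w hw
    induction hw using Submodule.span_induction with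
    | mem x hx => exact h2 x hx
    | zero => exact M0.zero_mem
    | add x y _ _ hx hy => simpa using M0.add_mem hx hy
    | smul c x _ hx => simpa using M0.smul_mem c hx
  have h : ((p1, 0) : M × M') + (0, p2) = (p1, p2) := by simp
  rw [← h]
  exact M0.add_mem (key1 _ hp.1) (key2 _ hp.2)

lemma dist_shift_left {m : ℕ} (u p : Fin m → ZMod 2) :
    hammingDist u (u + p) = hammingDist 0 p := by
  rw [hammingDist_eq_hammingNorm, hammingDist_eq_hammingNorm]
  congr 1
  abel_nf

lemma dist_shift_zero {m : ℕ} (x p : Fin m → ZMod 2) :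
    hammingDist 0 (x + p) = hammingDist x p := by
  rw [hammingDist_eq_hammingNorm, hammingDist_eq_hammingNorm]
  congr 1
  funext i
  have h : ∀ a b : ZMod 2, (0 : ZMod 2) - (a + b) = a - b := by decide
  simpa using h (x i) (p i)

lemma sup_span_singleton_coe {V : Type*} [AddCommGroup V] [Module (ZMod 2) V]
    (P : Submodule (ZMod 2) V) (x : V) :
    ((P ⊔ Submodule.span (ZMod 2) {x} : Submodule (ZMod 2) V) : Set V)
      = (P : Set V) ∪ (fun p => x + p) '' (P : Set V) := by
  ext y
  constructor
  · intro hy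
    rw [SetLike.mem_coe, Submodule.mem_sup] at hy
    obtain ⟨p, hp, z, hz, rfl⟩ := hy
    rw [Submodule.mem_span_singleton] at hz
    obtain ⟨c, rfl⟩ := hz
    rcases (by decide : ∀ c : ZMod 2, c = 0 ∨ c = 1) c with rfl | rfl
    · left; simpa using hp
    · right; exact ⟨p, hp, by rw [one_smul]; abel_nf⟩
  · rintro (hy | ⟨p, hp, rfl⟩)
    · exact Submodule.mem_sup_left hy
    · exact Submodule.add_mem _
        (Submodule.mem_sup_right (Submodule.subset_span rfl))
        (Submodule.mem_sup_left hp)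

lemma hamming_split {N' N'' : ℕ} {q : Fin N' → Fin (N' + N'')} {e : Fin N'' → Fin (N' + N'')}
    (hbij : Function.Bijective (Sum.elim q e)) (v w : Fin (N' + N'') → ZMod 2) :
    hammingDist v w = hammingDist (v ∘ q) (w ∘ q) + hammingDist (v ∘ e) (w ∘ e) := by
  classical
  simp only [hammingDist]
  rw [Finset.card_filter, Finset.card_filter, Finset.card_filter]
  have h1 : (∑ k : Fin (N' + N''), if v k ≠ w k then 1 else 0)
      = ∑ x : Fin N' ⊕ Fin N'',
          (if v (Sum.elim q e x) ≠ w (Sum.elim q e x) then 1 else 0) :=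
    (Fintype.sum_bijective _ hbij _ _ (fun _ => rfl)).symm
  rw [h1, Fintype.sum_sum_type]
  rfl

lemma key_order {N' N'' : ℕ} (γ : Fin N' → Fin N'') (hγ : StrictMono γ)
    (q : Fin N' → Fin (N' + N'')) (hq : ∀ t, (q t : ℕ) = (γ t : ℕ) + (t : ℕ))
    (e : Fin N'' → Fin (N' + N'')) (he : StrictMono e)
    (hsplit : ∀ k, (∃ t, q t = k) ↔ ¬ ∃ j, e j = k)
    (t : Fin N') (j : Fin N'') : e j ≤ q t ↔ (j : ℕ) < (γ t : ℕ) := by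
  classical
  have hqm : StrictMono q := fun a b h => by
    have h2 := hγ h
    rw [Fin.lt_def] at h ⊢
    rw [Fin.lt_def] at h2
    rw [hq, hq]
    omega
  set B : Finset (Fin N'') := Finset.univ.filter (fun j' => e j' ≤ q t) with hB
  have hBcard : B.card = (γ t : ℕ) := by
    have hdisj : Disjoint ((Finset.Iic t).image q) (B.image e) := by
      rw [Finset.disjoint_left]
      rintro k hk1 hk2
      obtain ⟨s, _, rfl⟩ := Finset.mem_image.mp hk1
      obtain ⟨j', _, hj'⟩ := Finset.mem_image.mp hk2
      exact (hsplit (q s)).mp ⟨s, rfl⟩ ⟨j', hj'⟩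
    have hunion : Finset.Iic (q t) = (Finset.Iic t).image q ∪ B.image e := by
      ext k
      simp only [Finset.mem_Iic, Finset.mem_union, Finset.mem_image, Finset.mem_filter,
        Finset.mem_univ, true_and, hB]
      constructor
      · intro hk
        by_cases h : ∃ s, q s = k
        · obtain ⟨s, rfl⟩ := h
          exact Or.inl ⟨s, hqm.le_iff_le.mp hk, rfl⟩
        · have h2 : ∃ j', e j' = k := by
            by_contra hn
            exact h ((hsplit k).mpr hn)
          obtain ⟨j', rfl⟩ := h2
          exact Or.inr ⟨j', hk, rfl⟩
      · rintro (⟨s, hs, rfl⟩ | ⟨j', hj', rfl⟩)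
        · exact hqm.le_iff_le.mpr hs
        · exact hj'
    have hc1 : (Finset.Iic (q t)).card = (q t : ℕ) + 1 := Fin.card_Iic _
    have hc2 : ((Finset.Iic t).image q).card = (t : ℕ) + 1 := by
      rw [Finset.card_image_of_injective _ hqm.injective, Fin.card_Iic]
    have hc3 : (B.image e).card = B.card := Finset.card_image_of_injective _ he.injective
    have hcu := Finset.card_union_of_disjoint hdisj
    rw [← hunion, hc1, hc2, hc3, hq] at hcu
    omega
  constructor
  · intro hle
    by_contra hlt
    push_neg at hlt
    have hγj : γ t ≤ j := by rw [Fin.le_def]; omega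
    have hsub : Finset.Iic j ⊆ B := fun j' hj' =>
      Finset.mem_filter.mpr ⟨Finset.mem_univ _,
        le_trans (he.monotone (Finset.mem_Iic.mp hj')) hle⟩
    have hcard := Finset.card_le_card hsub
    rw [Fin.card_Iic, hBcard] at hcard
    have hh : (γ t : ℕ) ≤ (j : ℕ) := hγj
    omega
  · intro hlt
    by_contra hle
    have hsub : B ⊆ Finset.Iio j := by
      intro j' hj'
      rw [Finset.mem_Iio]
      by_contra h2
      push_neg at h2
      exact hle (le_trans (he.monotone h2) (Finset.mem_filter.mp hj').2)
    have hcard := Finset.card_le_card hsub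
    rw [Fin.card_Iio, hBcard] at hcard
    omega

end Aux

/-- Lemma 2 (coset spectrum of left-stitched polar codes). Positions
`γ₁ < … < γ_{N'}` in `[N'']` determine `Γ₁ = {γ_t + t - 1}` (0-indexed: `q t` with
`(q t : ℕ) = γ t + t`), whose complement is enumerated in increasing order by `e`;
the element `γ_t + t` of `Γ₂` is `e (γ t)`.  If `G` carries `G'` on `Γ₁×Γ₁`, zero
on `Γ₁×Γ₁ᶜ`, `G'` again on `Γ₂×Γ₁`, zero on `(Γ₁∪Γ₂)ᶜ×Γ₁`, and `G''` on
`Γ₁ᶜ×Γ₁ᶜ`, then its coset spectrum satisfies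
`D_{γ_t+t-1} = min(D'_t, D''_{γ_t})`, `D_{γ_t+t} = D'_t + D''_{γ_t}`, and
`D_i = D''_j` for the remaining indices `i = e j`. -/
theorem left_stitched_coset_spectrum (N' N'' : ℕ)
    (G' : Matrix (Fin N') (Fin N') (ZMod 2))
    (G'' : Matrix (Fin N'') (Fin N'') (ZMod 2))
    (γ : Fin N' → Fin N'') (hγ : StrictMono γ)
    (G : Matrix (Fin (N' + N'')) (Fin (N' + N'')) (ZMod 2))
    (q : Fin N' → Fin (N' + N'')) (hq : ∀ t, (q t : ℕ) = (γ t : ℕ) + (t : ℕ))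
    (e : Fin N'' → Fin (N' + N'')) (he : StrictMono e)
    (hsplit : ∀ k : Fin (N' + N''), (∃ t, q t = k) ↔ ¬ ∃ j, e j = k)
    (h11 : ∀ t s, G (q t) (q s) = G' t s)
    (h10 : ∀ t j, G (q t) (e j) = 0)
    (h21 : ∀ t s, G (e (γ t)) (q s) = G' t s)
    (h01 : ∀ j s, (∀ t, γ t ≠ j) → G (e j) (q s) = 0)
    (h22 : ∀ j j', G (e j) (e j') = G'' j j') :
    (∀ t, cosetD G (q t) = min (cosetD G' t) (cosetD G'' (γ t))) ∧
    (∀ t, cosetD G (e (γ t)) = cosetD G' t + cosetD G'' (γ t)) ∧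
    (∀ j, (∀ t, γ t ≠ j) → cosetD G (e j) = cosetD G'' j) := by
  classical
  have hqm : StrictMono q := fun a b h => by
    have h2 := hγ h
    rw [Fin.lt_def] at h ⊢
    rw [Fin.lt_def] at h2
    rw [hq, hq]
    omega
  have hne : ∀ (s : Fin N') (j : Fin N''), q s ≠ e j := fun s j h =>
    (hsplit (q s)).mp ⟨s, rfl⟩ ⟨j, h.symm⟩
  have hkey : ∀ (t : Fin N') (j : Fin N''), e j ≤ q t ↔ (j : ℕ) < (γ t : ℕ) :=
    key_order γ hγ q hq e he hsplit
  have hQltE : ∀ (t : Fin N') (j : Fin N''), q t < e j ↔ (γ t : ℕ) ≤ (j : ℕ) := by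
    intro t j
    rw [← not_le, hkey]
    omega
  have hEltQ : ∀ (t : Fin N') (j : Fin N''), e j < q t ↔ (j : ℕ) < (γ t : ℕ) := by
    intro t j
    constructor
    · intro h
      exact (hkey t j).mp h.le
    · intro h
      exact lt_of_le_of_ne ((hkey t j).mpr h) (fun hh => hne t j hh.symm)
  have hbij : Function.Bijective (Sum.elim q e) := by
    constructor
    · intro x y hxy
      cases x with
      | inl a =>
        cases y with
        | inl b => exact congrArg Sum.inl (hqm.injective hxy)
        | inr b => exact absurd hxy (hne a b)
      | inr a =>
        cases y with
        | inl b => exact absurd hxy.symm (hne b a)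
        | inr b => exact congrArg Sum.inr (he.injective hxy)
    · intro k
      by_cases h : ∃ s, q s = k
      · obtain ⟨s, hs⟩ := h
        exact ⟨Sum.inl s, hs⟩
      · have h2 : ∃ j, e j = k := by
          by_contra hn
          exact h ((hsplit k).mpr hn)
        obtain ⟨j, hj⟩ := h2
        exact ⟨Sum.inr j, hj⟩
  set Φ : (Fin (N' + N'') → ZMod 2) →ₗ[ZMod 2] (Fin N' → ZMod 2) × (Fin N'' → ZMod 2) :=
    (LinearMap.funLeft (ZMod 2) (ZMod 2) q).prod (LinearMap.funLeft (ZMod 2) (ZMod 2) e)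
    with hΦdef
  have hrowq : ∀ s, Φ (G (q s)) = (G' s, (0 : Fin N'' → ZMod 2)) := fun s =>
    Prod.ext (funext fun s' => h11 s s') (funext fun j => h10 s j)
  have hrow2 : ∀ s, Φ (G (e (γ s))) = (G' s, G'' (γ s)) := fun s =>
    Prod.ext (funext fun s' => h21 s s') (funext fun j => h22 (γ s) j)
  have hrow0 : ∀ j, (∀ t, γ t ≠ j) → Φ (G (e j)) = ((0 : Fin N' → ZMod 2), G'' j) :=
    fun j hj => Prod.ext (funext fun s' => h01 j s' hj) (funext fun j' => h22 j j')
  have haddself : ∀ v : Fin N' → ZMod 2, v + v = 0 := fun v =>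
    funext fun i => by
      have h : ∀ a : ZMod 2, a + a = 0 := by decide
      exact h (v i)
  have main_eq : ∀ i : Fin (N' + N''),
      cosetD G i = sInf ((fun p : (Fin N' → ZMod 2) × (Fin N'' → ZMod 2) =>
          hammingDist ((G i) ∘ q) p.1 + hammingDist ((G i) ∘ e) p.2) ''
        ((Submodule.span (ZMod 2) (Φ '' {v | ∃ k, i < k ∧ v = G k}) :
            Submodule (ZMod 2) _) : Set _)) := by
    intro i
    rw [cosetD, ← Submodule.map_span, Submodule.map_coe, Set.image_image]
    exact congrArg sInf (Set.image_congr fun w _ => hamming_split hbij (G i) w)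
  have hgen : ∀ (i k : Fin (N' + N'')), i < k →
      Φ (G k) ∈ Submodule.span (ZMod 2) (Φ '' {v | ∃ k', i < k' ∧ v = G k'}) :=
    fun i k hik => Submodule.subset_span ⟨G k, ⟨k, hik, rfl⟩, rfl⟩
  refine ⟨?_, ?_, ?_⟩
  · -- Case 1 : i = q t
    intro t
    have hspan1 : Submodule.span (ZMod 2) (Φ '' {v | ∃ k, q t < k ∧ v = G k})
        = ((Submodule.span (ZMod 2) {v : Fin N' → ZMod 2 | ∃ s, t < s ∧ v = G' s}).prod
            (Submodule.span (ZMod 2) {v : Fin N'' → ZMod 2 | ∃ j', γ t < j' ∧ v = G'' j'}))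
          ⊔ Submodule.span (ZMod 2) {((G' t, G'' (γ t)) :
              (Fin N' → ZMod 2) × (Fin N'' → ZMod 2))} := by
      apply le_antisymm
      · rw [Submodule.span_le]
        rintro _ ⟨v, ⟨k, hk, rfl⟩, rfl⟩
        rcases hbij.2 k with ⟨x, rfl⟩
        cases x with
        | inl s =>
          rw [Sum.elim_inl] at hk ⊢
          rw [hrowq s]
          have hst : t < s := hqm.lt_iff_lt.mp hk
          exact Submodule.mem_sup_left (Submodule.mem_prod.mpr
            ⟨Submodule.subset_span ⟨s, hst, rfl⟩, Submodule.zero_mem _⟩)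
        | inr j =>
          rw [Sum.elim_inr] at hk ⊢
          have hγtj : (γ t : ℕ) ≤ (j : ℕ) := (hQltE t j).mp hk
          by_cases hj : ∃ s, γ s = j
          · obtain ⟨s, rfl⟩ := hj
            have hts : t ≤ s := by
              by_contra hc
              push_neg at hc
              have := hγ hc
              rw [Fin.lt_def] at this
              omega
            rcases eq_or_lt_of_le hts with rfl | hlt
            · rw [hrow2 t]
              exact Submodule.mem_sup_right (Submodule.subset_span rfl)
            · rw [hrow2 s]
              exact Submodule.mem_sup_left (Submodule.mem_prod.mpr
                ⟨Submodule.subset_span ⟨s, hlt, rfl⟩,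
                 Submodule.subset_span ⟨γ s, hγ hlt, rfl⟩⟩)
          · push_neg at hj
            rw [hrow0 j hj]
            have hlt : γ t < j := by
              rw [Fin.lt_def]
              rcases lt_or_eq_of_le hγtj with h | h
              · exact h
              · exact absurd (Fin.ext h) (hj t)
            exact Submodule.mem_sup_left (Submodule.mem_prod.mpr
              ⟨Submodule.zero_mem _, Submodule.subset_span ⟨j, hlt, rfl⟩⟩)
      · apply sup_le
        · apply prod_le_span
          · rintro u ⟨s, hs, rfl⟩
            have hm := hgen (q t) (q s) (hqm hs)
            rwa [hrowq s] at hm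
          · rintro w ⟨j', hj', rfl⟩
            by_cases hj : ∃ s, γ s = j'
            · obtain ⟨s, rfl⟩ := hj
              have hts : t < s := hγ.lt_iff_lt.mp hj'
              have hk1 : q t < e (γ s) := (hQltE t (γ s)).mpr (le_of_lt (Fin.lt_def.mp hj'))
              have hk2 : q t < q s := hqm hts
              have m1 := hgen (q t) (e (γ s)) (hk1)
              have m2 := hgen (q t) (q s) hk2
              have madd := Submodule.add_mem _ m1 m2
              rw [hrow2 s, hrowq s] at madd
              have heq : ((G' s, G'' (γ s)) : (Fin N' → ZMod 2) × (Fin N'' → ZMod 2))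
                  + (G' s, 0) = ((0 : Fin N' → ZMod 2), G'' (γ s)) := by
                rw [Prod.mk_add_mk, haddself, add_zero]
              rwa [heq] at madd
            · push_neg at hj
              have hk : q t < e j' := (hQltE t j').mpr (le_of_lt (Fin.lt_def.mp hj'))
              have hm := hgen (q t) (e j') hk
              rwa [hrow0 j' hj] at hm
        · rw [Submodule.span_le, Set.singleton_subset_iff]
          have hk : q t < e (γ t) := (hQltE t (γ t)).mpr le_rfl
          have hm := hgen (q t) (e (γ t)) (hk)
          rwa [hrow2 t] at hm
    have ha : (G (q t)) ∘ q = G' t := funext fun s => h11 t s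
    have hb : (G (q t)) ∘ e = (0 : Fin N'' → ZMod 2) := funext fun j => h10 t j
    rw [main_eq (q t), ha, hb, hspan1, sup_span_singleton_coe, Set.image_union]
    have hPne : Set.Nonempty ((((Submodule.span (ZMod 2)
        {v : Fin N' → ZMod 2 | ∃ s, t < s ∧ v = G' s}).prod
        (Submodule.span (ZMod 2) {v : Fin N'' → ZMod 2 | ∃ j', γ t < j' ∧ v = G'' j'})) :
          Submodule (ZMod 2) ((Fin N' → ZMod 2) × (Fin N'' → ZMod 2))) :
          Set ((Fin N' → ZMod 2) × (Fin N'' → ZMod 2))) :=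
      ⟨0, by exact Submodule.zero_mem _⟩
    rw [nat_sInf_union (hPne.image _) ((hPne.image _).image _)]
    have himg2 : ((fun p : (Fin N' → ZMod 2) × (Fin N'' → ZMod 2) =>
          hammingDist (G' t) p.1 + hammingDist 0 p.2) ''
        ((fun p => ((G' t, G'' (γ t)) : (Fin N' → ZMod 2) × (Fin N'' → ZMod 2)) + p) ''
          (((Submodule.span (ZMod 2) {v : Fin N' → ZMod 2 | ∃ s, t < s ∧ v = G' s}).prod
            (Submodule.span (ZMod 2)
              {v : Fin N'' → ZMod 2 | ∃ j', γ t < j' ∧ v = G'' j'}) :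
              Submodule (ZMod 2) _) : Set _)))
        = ((fun p : (Fin N' → ZMod 2) × (Fin N'' → ZMod 2) =>
            hammingDist (0 : Fin N' → ZMod 2) p.1 + hammingDist (G'' (γ t)) p.2) ''
          (((Submodule.span (ZMod 2) {v : Fin N' → ZMod 2 | ∃ s, t < s ∧ v = G' s}).prod
            (Submodule.span (ZMod 2)
              {v : Fin N'' → ZMod 2 | ∃ j', γ t < j' ∧ v = G'' j'}) :
              Submodule (ZMod 2) _) : Set _)) := by
      rw [Set.image_image]
      apply Set.image_congr
      intro p _
      show hammingDist (G' t) (G' t + p.1) + hammingDist 0 (G'' (γ t) + p.2) = _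
      rw [dist_shift_left, dist_shift_zero]
    rw [himg2, dist_image_prod, dist_image_prod, sInf_dist_zero, sInf_dist_zero]
    rw [cosetD, cosetD, add_zero, zero_add]
  · -- Case 2 : i = e (γ t)
    intro t
    have hspan2 : Submodule.span (ZMod 2) (Φ '' {v | ∃ k, e (γ t) < k ∧ v = G k})
        = (Submodule.span (ZMod 2) {v : Fin N' → ZMod 2 | ∃ s, t < s ∧ v = G' s}).prod
            (Submodule.span (ZMod 2)
              {v : Fin N'' → ZMod 2 | ∃ j', γ t < j' ∧ v = G'' j'}) := by
      apply le_antisymm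
      · rw [Submodule.span_le]
        rintro _ ⟨v, ⟨k, hk, rfl⟩, rfl⟩
        rcases hbij.2 k with ⟨x, rfl⟩
        cases x with
        | inl s =>
          rw [Sum.elim_inl] at hk ⊢
          rw [hrowq s]
          have hst : t < s := by
            have h2 := (hEltQ s (γ t)).mp hk
            by_contra hc
            push_neg at hc
            have := hγ.monotone hc
            rw [Fin.le_def] at this
            omega
          exact Submodule.mem_prod.mpr
            ⟨Submodule.subset_span ⟨s, hst, rfl⟩, Submodule.zero_mem _⟩
        | inr j =>
          rw [Sum.elim_inr] at hk ⊢
          have hγtj : γ t < j := he.lt_iff_lt.mp hk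
          by_cases hj : ∃ s, γ s = j
          · obtain ⟨s, rfl⟩ := hj
            have hts : t < s := hγ.lt_iff_lt.mp hγtj
            rw [hrow2 s]
            exact Submodule.mem_prod.mpr
              ⟨Submodule.subset_span ⟨s, hts, rfl⟩,
               Submodule.subset_span ⟨γ s, hγtj, rfl⟩⟩
          · push_neg at hj
            rw [hrow0 j hj]
            exact Submodule.mem_prod.mpr
              ⟨Submodule.zero_mem _, Submodule.subset_span ⟨j, hγtj, rfl⟩⟩
      · apply prod_le_span
        · rintro u ⟨s, hs, rfl⟩
          have hk : e (γ t) < q s := (hEltQ s (γ t)).mpr (Fin.lt_def.mp (hγ hs))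
          have hm := hgen (e (γ t)) (q s) hk
          rwa [hrowq s] at hm
        · rintro w ⟨j', hj', rfl⟩
          by_cases hj : ∃ s, γ s = j'
          · obtain ⟨s, rfl⟩ := hj
            have hk1 : e (γ t) < e (γ s) := he hj'
            have hk2 : e (γ t) < q s := (hEltQ s (γ t)).mpr (Fin.lt_def.mp hj')
            have m1 := hgen (e (γ t)) (e (γ s)) (hk1)
            have m2 := hgen (e (γ t)) (q s) hk2
            have madd := Submodule.add_mem _ m1 m2
            rw [hrow2 s, hrowq s] at madd
            have heq : ((G' s, G'' (γ s)) : (Fin N' → ZMod 2) × (Fin N'' → ZMod 2))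
                + (G' s, 0) = ((0 : Fin N' → ZMod 2), G'' (γ s)) := by
              rw [Prod.mk_add_mk, haddself, add_zero]
            rwa [heq] at madd
          · push_neg at hj
            have hk : e (γ t) < e j' := he hj'
            have hm := hgen (e (γ t)) (e j') hk
            rwa [hrow0 j' hj] at hm
    have ha : (G (e (γ t))) ∘ q = G' t := funext fun s => h21 t s
    have hb : (G (e (γ t))) ∘ e = G'' (γ t) := funext fun j => h22 (γ t) j
    rw [main_eq (e (γ t)), ha, hb, hspan2, dist_image_prod, cosetD, cosetD]
  · -- Case 3 : i = e j, j not in range γ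
    intro j hj
    have hspan3 : Submodule.span (ZMod 2) (Φ '' {v | ∃ k, e j < k ∧ v = G k})
        = (Submodule.span (ZMod 2) {v : Fin N' → ZMod 2 | ∃ s, j < γ s ∧ v = G' s}).prod
            (Submodule.span (ZMod 2)
              {v : Fin N'' → ZMod 2 | ∃ j', j < j' ∧ v = G'' j'}) := by
      apply le_antisymm
      · rw [Submodule.span_le]
        rintro _ ⟨v, ⟨k, hk, rfl⟩, rfl⟩
        rcases hbij.2 k with ⟨x, rfl⟩
        cases x with
        | inl s =>
          rw [Sum.elim_inl] at hk ⊢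
          rw [hrowq s]
          have hst : j < γ s := by
            rw [Fin.lt_def]
            exact (hEltQ s j).mp hk
          exact Submodule.mem_prod.mpr
            ⟨Submodule.subset_span ⟨s, hst, rfl⟩, Submodule.zero_mem _⟩
        | inr j' =>
          rw [Sum.elim_inr] at hk ⊢
          have hjj' : j < j' := he.lt_iff_lt.mp hk
          by_cases hjs : ∃ s, γ s = j'
          · obtain ⟨s, rfl⟩ := hjs
            rw [hrow2 s]
            exact Submodule.mem_prod.mpr
              ⟨Submodule.subset_span ⟨s, hjj', rfl⟩,
               Submodule.subset_span ⟨γ s, hjj', rfl⟩⟩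
          · push_neg at hjs
            rw [hrow0 j' hjs]
            exact Submodule.mem_prod.mpr
              ⟨Submodule.zero_mem _, Submodule.subset_span ⟨j', hjj', rfl⟩⟩
      · apply prod_le_span
        · rintro u ⟨s, hs, rfl⟩
          have hk : e j < q s := (hEltQ s j).mpr (Fin.lt_def.mp hs)
          have hm := hgen (e j) (q s) hk
          rwa [hrowq s] at hm
        · rintro w ⟨j', hj', rfl⟩
          by_cases hjs : ∃ s, γ s = j'
          · obtain ⟨s, rfl⟩ := hjs
            have hk1 : e j < e (γ s) := he hj'
            have hk2 : e j < q s := (hEltQ s j).mpr (Fin.lt_def.mp hj')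
            have m1 := hgen (e j) (e (γ s)) (hk1)
            have m2 := hgen (e j) (q s) hk2
            have madd := Submodule.add_mem _ m1 m2
            rw [hrow2 s, hrowq s] at madd
            have heq : ((G' s, G'' (γ s)) : (Fin N' → ZMod 2) × (Fin N'' → ZMod 2))
                + (G' s, 0) = ((0 : Fin N' → ZMod 2), G'' (γ s)) := by
              rw [Prod.mk_add_mk, haddself, add_zero]
            rwa [heq] at madd
          · push_neg at hjs
            have hk : e j < e j' := he hj'
            have hm := hgen (e j) (e j') hk
            rwa [hrow0 j' hjs] at hm
    have ha : (G (e j)) ∘ q = (0 : Fin N' → ZMod 2) := funext fun s => h01 j s hj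
    have hb : (G (e j)) ∘ e = G'' j := funext fun j' => h22 j j'
    rw [main_eq (e j), ha, hb, hspan3, dist_image_prod, sInf_dist_zero, cosetD, zero_add]
end

section
/- Let G = [[G', 0],[P, G'']] be a block matrix over 𝔽₂ where G' is N'×N', G'' is N''×N'', and each row of P is obtained from the corresponding row of G'' by selecting a fixed subset Γ' of N' ≤ N'' coordinates (P = G''_{·,Γ'}). Then every codeword c = u·G satisfies wt(c) ≥ wt(u_{[N'+1,N]}·G''), and if u_{[N'+1,N]} ≠ 0 then wt(c) ≤ 2·wt(u_{[N'+1,N]}·G'') when u_{[N']} = 0. In particular the minimum distance d of the code generated by the last N'' rows of G satisfies d'' ≤ d ≤ 2·d'', where d'' is the minimum distance of the code generated by G''. -/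
open Matrix

lemma hn_sum {α β : Type*} [Fintype α] [Fintype β] [DecidableEq α] [DecidableEq β]
    (f : α ⊕ β → ZMod 2) :
    hammingNorm f = hammingNorm (f ∘ Sum.inl) + hammingNorm (f ∘ Sum.inr) := by
  simp only [hammingNorm, Finset.card_filter]
  rw [Fintype.sum_sum_type]
  rfl

lemma hn_comp_inj {α β : Type*} [Fintype α] [Fintype β] [DecidableEq α] [DecidableEq β]
    (f : β → ZMod 2) (γ : α → β) (hγ : Function.Injective γ) :
    hammingNorm (f ∘ γ) ≤ hammingNorm f := by
  simp only [hammingNorm]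
  apply Finset.card_le_card_of_injOn γ
  · intro a ha
    simp_all
  · exact hγ.injOn

/-- Weight behavior of the lower branch of a right-stitched polar code:
with `G = [[G',0],[P,G'']]` where `P = G''_{·,Γ'}` selects `N' ≤ N''` columns of
`G''`, every codeword `c = u·G` satisfies `wt(c) ≥ wt(u_lower · G'')`; if
`u_upper = 0` and `u_lower ≠ 0` then also `wt(c) ≤ 2·wt(u_lower · G'')`.
Consequently the minimum distance `d` of the code generated by the last `N''`
rows satisfies `d'' ≤ d ≤ 2·d''`. -/
theorem right_stitched_lower_branch_weights (N' N'' : ℕ) (hle : N' ≤ N'')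
    (G' : Matrix (Fin N') (Fin N') (ZMod 2))
    (G'' : Matrix (Fin N'') (Fin N'') (ZMod 2))
    (γ : Fin N' → Fin N'') (hγ : Function.Injective γ) :
    let P : Matrix (Fin N'') (Fin N') (ZMod 2) := fun i j => G'' i (γ j)
    let G := Matrix.fromBlocks G' 0 P G''
    (∀ u : Fin N' ⊕ Fin N'' → ZMod 2,
      hammingNorm ((fun j => u (Sum.inr j)) ᵥ* G'') ≤ hammingNorm (u ᵥ* G)) ∧
    (∀ u : Fin N' ⊕ Fin N'' → ZMod 2,
      (∀ i, u (Sum.inl i) = 0) → (fun j => u (Sum.inr j)) ≠ 0 →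
      hammingNorm (u ᵥ* G) ≤ 2 * hammingNorm ((fun j => u (Sum.inr j)) ᵥ* G'')) ∧
    (let B : Matrix (Fin N'') (Fin N' ⊕ Fin N'') (ZMod 2) :=
        Matrix.of fun i => Sum.elim (fun j => G'' i (γ j)) (G'' i)
     let d : ℕ := sInf ((fun v => hammingNorm (v ᵥ* B)) '' {v | v ≠ 0})
     let d'' : ℕ := sInf ((fun v => hammingNorm (v ᵥ* G'')) '' {v | v ≠ 0})
     d'' ≤ d ∧ d ≤ 2 * d'') := by
  intro P G
  have hvm : ∀ u : Fin N' ⊕ Fin N'' → ZMod 2,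
      u ᵥ* G = Sum.elim ((u ∘ Sum.inl) ᵥ* G' + (u ∘ Sum.inr) ᵥ* P)
        ((u ∘ Sum.inl) ᵥ* 0 + (u ∘ Sum.inr) ᵥ* G'') := fun u =>
    Matrix.vecMul_fromBlocks G' 0 P G'' u
  refine ⟨?_, ?_, ?_⟩
  · intro u
    rw [hvm, hn_sum]
    have : (Sum.elim ((u ∘ Sum.inl) ᵥ* G' + (u ∘ Sum.inr) ᵥ* P)
        ((u ∘ Sum.inl) ᵥ* 0 + (u ∘ Sum.inr) ᵥ* G'')) ∘ Sum.inr
        = (fun j => u (Sum.inr j)) ᵥ* G'' := by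
      ext j
      simp only [Function.comp_apply, Sum.elim_inr, Matrix.vecMul_zero, zero_add]
      rfl
    rw [this]
    exact Nat.le_add_left _ _
  · intro u hu0 _
    rw [hvm, hn_sum]
    have hl : (Sum.elim ((u ∘ Sum.inl) ᵥ* G' + (u ∘ Sum.inr) ᵥ* P)
        ((u ∘ Sum.inl) ᵥ* 0 + (u ∘ Sum.inr) ᵥ* G'')) ∘ Sum.inl
        = ((fun j => u (Sum.inr j)) ᵥ* G'') ∘ γ := by
      ext j
      have h1 : (u ∘ Sum.inl) ᵥ* G' = 0 := by
        ext k; simp [Matrix.vecMul, dotProduct, Function.comp, hu0]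
      simp [Function.comp, h1, Matrix.vecMul, dotProduct, P]
    have hr : (Sum.elim ((u ∘ Sum.inl) ᵥ* G' + (u ∘ Sum.inr) ᵥ* P)
        ((u ∘ Sum.inl) ᵥ* 0 + (u ∘ Sum.inr) ᵥ* G'')) ∘ Sum.inr
        = (fun j => u (Sum.inr j)) ᵥ* G'' := by
      ext j
      simp only [Function.comp_apply, Sum.elim_inr, Matrix.vecMul_zero, zero_add]
      rfl
    rw [hl, hr, two_mul]
    exact Nat.add_le_add_right (hn_comp_inj _ _ hγ) _
  · intro B d d''
    have hB : ∀ v : Fin N'' → ZMod 2,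
        v ᵥ* B = Sum.elim ((v ᵥ* G'') ∘ γ) (v ᵥ* G'') := by
      intro v
      ext j
      cases j with
      | inl j => simp [Matrix.vecMul, dotProduct, B, Function.comp]
      | inr j => simp [Matrix.vecMul, dotProduct, B]
    have hwB : ∀ v : Fin N'' → ZMod 2,
        hammingNorm (v ᵥ* B) = hammingNorm ((v ᵥ* G'') ∘ γ) + hammingNorm (v ᵥ* G'') := by
      intro v
      rw [hB, hn_sum]
      congr 1
    by_cases h : ∃ v : Fin N'' → ZMod 2, v ≠ 0
    · obtain ⟨v, hv⟩ := h
      have hdne : ((fun v => hammingNorm (v ᵥ* B)) '' {v | v ≠ 0}).Nonempty :=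
        ⟨_, ⟨v, hv, rfl⟩⟩
      have hd''ne : ((fun v => hammingNorm (v ᵥ* G'')) '' {v | v ≠ 0}).Nonempty :=
        ⟨_, ⟨v, hv, rfl⟩⟩
      constructor
      · obtain ⟨v₀, hv₀, hv₀d⟩ := Nat.sInf_mem hdne
        calc d'' ≤ hammingNorm (v₀ ᵥ* G'') := Nat.sInf_le ⟨v₀, hv₀, rfl⟩
          _ ≤ hammingNorm (v₀ ᵥ* B) := by rw [hwB]; exact Nat.le_add_left _ _
          _ = d := hv₀d
      · obtain ⟨v₁, hv₁, hv₁d⟩ := Nat.sInf_mem hd''ne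
        calc d ≤ hammingNorm (v₁ ᵥ* B) := Nat.sInf_le ⟨v₁, hv₁, rfl⟩
          _ ≤ 2 * hammingNorm (v₁ ᵥ* G'') := by
              rw [hwB, two_mul]
              exact Nat.add_le_add_right (hn_comp_inj _ _ hγ) _
          _ = 2 * d'' := congrArg (fun x => 2 * x) hv₁d
    · push_neg at h
      have h1 : {v : Fin N'' → ZMod 2 | v ≠ 0} = ∅ := by
        ext v; simp [h v]
      have hd : d = 0 := by
        show sInf _ = 0
        rw [h1, Set.image_empty, Nat.sInf_empty]
      have hd'' : d'' = 0 := by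
        show sInf _ = 0
        rw [h1, Set.image_empty, Nat.sInf_empty]
      simp [hd, hd'']
end

section
/- Define the column-operation matrices T(a,b) over 𝔽₂ (identity except entry (b,a)=1) for a < b. For N = 2^m, the sequence consisting of all pairs (i, i + N/2) for 1 ≤ i ≤ N/2, then all pairs within each half at stride N/4, recursively down to stride 1, produces a product of T-matrices equal to the polar generator matrix F^{⊗m} (up to the standard index ordering). In particular, F^{⊗m} is a product of exactly (N/2)·m = (N/2)·log₂ N elementary matrices T(a,b). -/
/-- The polar kernel `F = [[1,0],[1,1]]` over `𝔽₂`. -/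
def polarKernel : Matrix (Fin 2) (Fin 2) (ZMod 2) := !![1, 0; 1, 1]

/-- The `m`-fold Kronecker power `F^{⊗m}`. -/
def polarMatrix : (m : ℕ) → Matrix (Fin (2 ^ m)) (Fin (2 ^ m)) (ZMod 2)
  | 0 => 1
  | m + 1 =>
      Matrix.reindex (finProdFinEquiv.trans (finCongr (pow_succ 2 m).symm))
        (finProdFinEquiv.trans (finCongr (pow_succ 2 m).symm))
        (Matrix.kroneckerMap (· * ·) (polarMatrix m) polarKernel)

/-- The elementary column-operation matrix `T(a,b)` (identity except entry
`(b,a) = 1`), with indices given as natural numbers. -/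
def elemT (N a b : ℕ) : Matrix (Fin N) (Fin N) (ZMod 2) :=
  1 + Matrix.of (fun i j : Fin N => if (i : ℕ) = b ∧ (j : ℕ) = a then 1 else 0)

/-- The coupling sequence of the regular polar code: all pairs `(i, i + N/2)`
at stride `N/2`, then stride `N/4` within each half, recursively down to
stride `1` (0-indexed). -/
def polarCouplings (m : ℕ) : List (ℕ × ℕ) :=
  (List.range m).flatMap fun d =>
    ((List.range (2 ^ m)).filter fun i => i / 2 ^ (m - 1 - d) % 2 = 0).map
      fun i => (i, i + 2 ^ (m - 1 - d))

/-!
Read indices in binary. The entry `(i, j)` of `F^{⊗m}` is `1` exactly when the bits of `j` are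
among those of `i`. The couplings at stride `2 ^ p` join each `i` with bit `p` clear to `i + 2 ^ p`;
their elementary matrices `1 + E` satisfy `E * E' = 0`, so the layer multiplies out to `1 + ∑ E`,
which acts as `F` on bit `p` and as the identity on the other bits. Multiplying the layers
`p = 0, 1, …` onto the identity in turn applies `F` to one more low bit each time, and after `m`
layers yields `F^{⊗m}`.
-/

namespace Nat

/-- Bit `p` of `x` is clear, so adding `2 ^ p` produces no carry. -/
theorem testBit_add_two_pow_of_ne {x p b : ℕ} (hx : x.testBit p = false) (hb : b ≠ p) :
    (x + 2 ^ p).testBit b = x.testBit b := by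
  have hr : x % 2 ^ (p + 1) < 2 ^ p := lt_pow_two_of_testBit _ fun k hk => by
    rcases hk.eq_or_lt with rfl | hk
    · simpa using hx
    · simp [testBit_mod_two_pow, show ¬ k < p + 1 by omega]
  have hr' : x % 2 ^ (p + 1) + 2 ^ p < 2 ^ (p + 1) := by rw [pow_succ 2 p] at hr ⊢; omega
  have hx' : x + 2 ^ p = 2 ^ (p + 1) * (x / 2 ^ (p + 1)) + (x % 2 ^ (p + 1) + 2 ^ p) := by
    have := Nat.div_add_mod x (2 ^ (p + 1)); omega
  conv_rhs => rw [← Nat.div_add_mod x (2 ^ (p + 1))]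
  rw [hx', testBit_two_pow_mul_add _ hr',
    testBit_two_pow_mul_add _ (hr.trans (Nat.pow_lt_pow_succ one_lt_two))]
  split_ifs with hbp
  · rw [add_comm, testBit_two_pow_add_gt (by omega)]
  · rfl

theorem testBit_add_two_pow_self {x p : ℕ} : (x + 2 ^ p).testBit p = !x.testBit p := by
  rw [add_comm, testBit_two_pow_add_eq]

theorem testBit_eq_false_and_eq_add_two_pow_iff {x y p : ℕ} :
    x.testBit p = false ∧ y = x + 2 ^ p ↔ y.testBit p = true ∧ x = y - 2 ^ p := by
  constructor
  · rintro ⟨hx, rfl⟩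
    exact ⟨by simp [testBit_add_two_pow_self, hx], by omega⟩
  · rintro ⟨hy, rfl⟩
    have hle := ge_two_pow_of_testBit hy
    have hy' : y = y - 2 ^ p + 2 ^ p := by omega
    rw [hy', testBit_add_two_pow_self] at hy
    exact ⟨by simpa using hy, hy'⟩

theorem add_two_pow_lt_two_pow {x p m : ℕ} (hx : x < 2 ^ m) (hxp : x.testBit p = false)
    (hp : p < m) : x + 2 ^ p < 2 ^ m :=
  lt_pow_two_of_testBit _ fun b hb => by
    rw [testBit_add_two_pow_of_ne hxp (by omega), testBit_lt_two_pow (hx.trans_le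
      (Nat.pow_le_pow_right two_pos hb))]

theorem length_filter_not_testBit_range_two_pow {p m : ℕ} (hp : p < m) :
    ((List.range (2 ^ m)).filter fun i => !i.testBit p).length = 2 ^ (m - 1) := by
  induction m with
  | zero => omega
  | succ k ih =>
    rw [pow_succ, mul_two, List.range_add, List.filter_append, List.length_append,
      List.filter_map, List.length_map]
    rcases (Nat.lt_succ_iff.mp hp).lt_or_eq with hpk | rfl
    · have hshift : (List.range (2 ^ k)).filter ((fun i => !i.testBit p) ∘ (2 ^ k + ·)) =
          (List.range (2 ^ k)).filter fun i => !i.testBit p :=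
        List.filter_congr fun x _ => by simp [testBit_two_pow_add_gt hpk]
      rw [hshift, ih hpk, ← two_mul, ← pow_succ']
      congr 1; omega
    · have hlow : (List.range (2 ^ p)).filter (fun i => !i.testBit p) = List.range (2 ^ p) :=
        List.filter_eq_self.mpr fun x hx => by simp [testBit_lt_two_pow (List.mem_range.mp hx)]
      have hhigh : (List.range (2 ^ p)).filter ((fun i => !i.testBit p) ∘ (2 ^ p + ·)) = [] :=
        List.filter_eq_nil_iff.mpr fun x hx => by
          simp [testBit_two_pow_add_eq, testBit_lt_two_pow (List.mem_range.mp hx)]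
      simp [hlow, hhigh]

theorem not_testBit_eq_decide_div_two_pow_mod_two_eq_zero (x p : ℕ) :
    (!x.testBit p) = decide (x / 2 ^ p % 2 = 0) := by
  rw [testBit_eq_decide_div_mod_eq]
  rcases mod_two_eq_zero_or_one (x / 2 ^ p) with h | h <;> simp [h]

end Nat

theorem List.prod_map_one_add_of_mul_eq_zero {ι R : Type*} [Semiring R] (l : List ι)
    (e : ι → R) (h : ∀ a ∈ l, ∀ b ∈ l, e a * e b = 0) :
    (l.map fun a => 1 + e a).prod = 1 + (l.map e).sum := by
  induction l with
  | nil => simp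
  | cons a t ih =>
    have hrest : e a * (t.map e).sum = 0 := by
      rw [← List.sum_map_mul_left, List.sum_eq_zero]
      simp only [List.mem_map]
      rintro _ ⟨b, hb, rfl⟩
      exact h a List.mem_cons_self b (List.mem_cons_of_mem _ hb)
    rw [List.map_cons, List.prod_cons, ih fun x hx y hy =>
      h x (List.mem_cons_of_mem _ hx) y (List.mem_cons_of_mem _ hy)]
    simp only [List.map_cons, List.sum_cons, mul_add, add_mul, one_mul, mul_one, hrest]
    abel

section NatSingle

open Matrix

variable {R : Type*} [Semiring R]

def natSingle (N b a : ℕ) : Matrix (Fin N) (Fin N) R :=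
  of fun i j => if (i : ℕ) = b ∧ (j : ℕ) = a then 1 else 0

theorem natSingle_mul_natSingle_of_ne {N a c b d : ℕ} (h : c ≠ b) :
    (natSingle N a c * natSingle N b d : Matrix (Fin N) (Fin N) R) = 0 := by
  ext i j
  simp only [mul_apply, natSingle, of_apply, Matrix.zero_apply]
  refine Finset.sum_eq_zero fun k _ => ?_
  split_ifs with h₁ h₂ <;> first | exact absurd (h₁.2.symm.trans h₂.1) h | simp

theorem sum_natSingle_add_apply {N s : ℕ} {l : List ℕ} (hl : l.Nodup) (i j : Fin N) :
    (l.map fun a => (natSingle N (a + s) a : Matrix (Fin N) (Fin N) R)).sum i j =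
      if (j : ℕ) ∈ l ∧ (i : ℕ) = j + s then 1 else 0 := by
  rw [← List.sum_toFinset _ hl, Matrix.sum_apply]
  have hterm : ∀ a : ℕ, (if (i : ℕ) = a + s ∧ (j : ℕ) = a then 1 else 0 : R) =
      if (j : ℕ) = a then (if (i : ℕ) = j + s then 1 else 0) else 0 := by
    intro a; split_ifs <;> simp_all
  simp only [natSingle, of_apply, hterm]
  simp only [Finset.sum_ite_eq, List.mem_toFinset, ite_and]

end NatSingle

def couplingLayer (N p : ℕ) : List (ℕ × ℕ) :=
  ((List.range N).filter fun i => !i.testBit p).map fun i => (i, i + 2 ^ p)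

theorem polarCouplings_eq_flatMap_couplingLayer (m : ℕ) :
    polarCouplings m = (List.range m).reverse.flatMap (couplingLayer (2 ^ m)) := by
  have hrev : (List.range m).reverse = (List.range m).map (m - 1 - ·) := by
    have := List.reverse_range' (s := 0) (n := m)
    rwa [← List.range_eq_range', zero_add] at this
  rw [polarCouplings, hrev, List.flatMap_map]
  congr 1; funext d
  simp only [couplingLayer, Nat.not_testBit_eq_decide_div_two_pow_mod_two_eq_zero]

theorem length_couplingLayer {m p : ℕ} (hp : p < m) :
    (couplingLayer (2 ^ m) p).length = 2 ^ (m - 1) := by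
  rw [couplingLayer, List.length_map, Nat.length_filter_not_testBit_range_two_pow hp]

theorem lt_of_mem_couplingLayer {m p : ℕ} (hp : p < m) {q : ℕ × ℕ}
    (hq : q ∈ couplingLayer (2 ^ m) p) : q.1 < q.2 ∧ q.2 < 2 ^ m := by
  obtain ⟨i, hi, rfl⟩ := List.mem_map.mp hq
  simp only [List.mem_filter, List.mem_range, Bool.not_eq_eq_eq_not, Bool.not_true] at hi
  exact ⟨Nat.lt_add_of_pos_right (Nat.two_pow_pos p), Nat.add_two_pow_lt_two_pow hi.1 hi.2 hp⟩

section LayerProducts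

open Matrix
open scoped Classical

variable {R : Type*} [Semiring R]

def layerMatrix (N p : ℕ) : Matrix (Fin N) (Fin N) R :=
  1 + of fun i j : Fin N => if (j : ℕ).testBit p = false ∧ (i : ℕ) = j + 2 ^ p then 1 else 0

theorem layerMatrix_mul_apply {N p : ℕ} (A : Matrix (Fin N) (Fin N) R) (i j : Fin N) :
    (layerMatrix N p * A : Matrix (Fin N) (Fin N) R) i j =
      A i j + if (i : ℕ).testBit p then A ⟨i - 2 ^ p, (Nat.sub_le _ _).trans_lt i.isLt⟩ j
        else 0 := by
  set l₀ : Fin N := ⟨i - 2 ^ p, (Nat.sub_le _ _).trans_lt i.isLt⟩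
  have hcoupled : ∀ l : Fin N, ((l : ℕ).testBit p = false ∧ (i : ℕ) = l + 2 ^ p) ↔
      ((i : ℕ).testBit p = true ∧ l₀ = l) := fun l => by
    rw [Nat.testBit_eq_false_and_eq_add_two_pow_iff, Fin.ext_iff, eq_comm (a := (l : ℕ))]
  rw [layerMatrix, add_mul, Matrix.one_mul, Matrix.add_apply, mul_apply]
  simp only [of_apply, hcoupled]
  simp only [ite_and, ite_mul, one_mul, zero_mul, Finset.sum_ite_irrel, Finset.sum_ite_eq,
    Finset.mem_univ, if_true, Finset.sum_const_zero]

theorem prod_map_elemT_couplingLayer (N p : ℕ) :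
    ((couplingLayer N p).map fun q => elemT N q.1 q.2).prod = layerMatrix N p := by
  rw [couplingLayer, List.map_map]
  set L := (List.range N).filter fun i => !i.testBit p
  have hL : ∀ a ∈ L, a.testBit p = false := fun a ha => by
    simpa using (List.mem_filter.mp ha).2
  have horth : ∀ a ∈ L, ∀ b ∈ L,
      (natSingle N (a + 2 ^ p) a * natSingle N (b + 2 ^ p) b : Matrix _ _ (ZMod 2)) = 0 :=
    fun a ha b hb => natSingle_mul_natSingle_of_ne fun hab => by
      simpa [Nat.testBit_add_two_pow_self, hL a ha, hL b hb] using congrArg (Nat.testBit · p) hab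
  change (L.map fun a => 1 + natSingle N (a + 2 ^ p) a).prod = _
  rw [List.prod_map_one_add_of_mul_eq_zero _ _ horth]
  congr 1
  ext i j
  rw [sum_natSingle_add_apply (List.nodup_range.filter _)]
  simp [j.isLt]

def IsSubmaskBelow (t j i : ℕ) : Prop :=
  ∀ b, if b < t then j.testBit b ≤ i.testBit b else j.testBit b = i.testBit b

/-- The matrix `1 ⊗ F^{⊗t}`: `F` on each of the `t` low bits of an index, the identity on the
higher ones. -/
noncomputable def partialPolar (N t : ℕ) : Matrix (Fin N) (Fin N) R :=
  of fun i j : Fin N => if IsSubmaskBelow t j i then 1 else 0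

theorem partialPolar_zero (N : ℕ) : (partialPolar N 0 : Matrix (Fin N) (Fin N) R) = 1 := by
  ext i j
  have hzero : IsSubmaskBelow 0 j i ↔ i = j := by
    simp only [IsSubmaskBelow, Nat.not_lt_zero, if_false, Fin.ext_iff]
    exact ⟨fun h => (Nat.eq_of_testBit_eq h).symm, fun h b => by rw [h]⟩
  simp only [partialPolar, of_apply, one_apply, hzero]

theorem layerMatrix_mul_partialPolar (N p : ℕ) :
    (layerMatrix N p * partialPolar N p : Matrix (Fin N) (Fin N) R) = partialPolar N (p + 1) := by
  ext i j
  rw [layerMatrix_mul_apply]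
  set Rest : Prop := ∀ b ≠ p, if b < p then (j : ℕ).testBit b ≤ (i : ℕ).testBit b
    else (j : ℕ).testBit b = (i : ℕ).testBit b
  have hsplit : ∀ t x, IsSubmaskBelow t j x ↔ (if p < t then (j : ℕ).testBit p ≤ x.testBit p
      else (j : ℕ).testBit p = x.testBit p) ∧
      ∀ b ≠ p, if b < t then (j : ℕ).testBit b ≤ x.testBit b
        else (j : ℕ).testBit b = x.testBit b :=
    fun _ _ => (Decidable.and_forall_ne p).symm
  have hsucc : IsSubmaskBelow (p + 1) j i ↔ (j : ℕ).testBit p ≤ (i : ℕ).testBit p ∧ Rest := by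
    rw [hsplit]
    refine and_congr (by simp) (forall₂_congr fun b hb => ?_)
    simp only [show b < p + 1 ↔ b < p by omega]
  have hself : IsSubmaskBelow p j i ↔ (j : ℕ).testBit p = (i : ℕ).testBit p ∧ Rest := by
    rw [hsplit, if_neg (lt_irrefl p)]
  simp only [partialPolar, of_apply]
  cases hi : (i : ℕ).testBit p
  · have hiff : IsSubmaskBelow (p + 1) j i ↔ IsSubmaskBelow p j i := by
      rw [hself, hsucc, hi]
      cases (j : ℕ).testBit p <;> simp
    simp only [hiff, Bool.false_eq_true, if_false, add_zero]
  · -- exactly one of the two summands survives, selected by bit `p` of `j`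
    obtain ⟨hlp, hil⟩ : (i - 2 ^ p : ℕ).testBit p = false ∧ (i : ℕ) = i - 2 ^ p + 2 ^ p :=
      Nat.testBit_eq_false_and_eq_add_two_pow_iff.mpr ⟨hi, rfl⟩
    have hl₀ : IsSubmaskBelow p j (i - 2 ^ p) ↔ (j : ℕ).testBit p = false ∧ Rest := by
      rw [hsplit, if_neg (lt_irrefl p), hlp]
      refine and_congr Iff.rfl (forall₂_congr fun b hb => ?_)
      conv_rhs => rw [hil, Nat.testBit_add_two_pow_of_ne hlp hb]
    simp only [hsucc, hself, hl₀, hi, if_true, Bool.le_true, true_and]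
    by_cases hR : Rest <;> cases (j : ℕ).testBit p <;> simp [hR]

theorem prod_map_layerMatrix_range_reverse (N t : ℕ) :
    (((List.range t).reverse.map (layerMatrix N)).prod : Matrix (Fin N) (Fin N) R) =
      partialPolar N t := by
  induction t with
  | zero => simp [partialPolar_zero]
  | succ t ih =>
    rw [List.range_succ, List.reverse_append, List.map_append, List.prod_append, ih]
    simpa using layerMatrix_mul_partialPolar N t

theorem polarKernel_apply (a c : Fin 2) :
    polarKernel a c = if (c : ℕ).testBit 0 ≤ (a : ℕ).testBit 0 then 1 else 0 := by
  fin_cases a <;> fin_cases c <;> simp [polarKernel]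

theorem polarMatrix_apply (m : ℕ) (i j : Fin (2 ^ m)) :
    polarMatrix m i j = if ∀ b, (j : ℕ).testBit b ≤ (i : ℕ).testBit b then 1 else 0 := by
  induction m with
  | zero =>
    obtain rfl : i = j := Fin.ext (by omega)
    simp [polarMatrix]
  | succ m ih =>
    show polarMatrix m ⟨i / 2, _⟩ ⟨j / 2, _⟩ * polarKernel ⟨i % 2, _⟩ ⟨j % 2, _⟩ = _
    rw [ih, polarKernel_apply, ite_zero_mul_ite_zero, one_mul]
    refine if_congr ?_ rfl rfl
    conv_rhs => rw [← Nat.and_forall_add_one]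
    simp only [Nat.testBit_add_one, Nat.testBit_zero, Nat.mod_mod, and_comm]

theorem polarMatrix_eq_partialPolar (m : ℕ) : polarMatrix m = partialPolar (2 ^ m) m := by
  ext i j
  rw [polarMatrix_apply, partialPolar, of_apply]
  refine if_congr (forall_congr' fun b => ?_) rfl rfl
  split_ifs with hb
  · rfl
  · simp [Nat.testBit_lt_two_pow (i.isLt.trans_le (Nat.pow_le_pow_right two_pos (not_lt.mp hb))),
      Nat.testBit_lt_two_pow (j.isLt.trans_le (Nat.pow_le_pow_right two_pos (not_lt.mp hb)))]

end LayerProducts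

theorem polar_matrix_as_coupling_product_general (m : ℕ) :
    (polarCouplings m).length = 2 ^ (m - 1) * m ∧
    (∀ p ∈ polarCouplings m, p.1 < p.2 ∧ p.2 < 2 ^ m) ∧
    ((polarCouplings m).map fun p => elemT (2 ^ m) p.1 p.2).prod = polarMatrix m := by
  have hlayer : ∀ p ∈ (List.range m).reverse, p < m := by simp
  rw [polarCouplings_eq_flatMap_couplingLayer]
  refine ⟨?_, fun q hq => ?_, ?_⟩
  · rw [List.length_flatMap, List.map_congr_left fun p hp => length_couplingLayer (hlayer p hp)]
    simp [mul_comm]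
  · obtain ⟨p, hp, hq⟩ := List.mem_flatMap.mp hq
    exact lt_of_mem_couplingLayer (hlayer p hp) hq
  · rw [List.map_flatMap, List.flatMap_def, List.prod_flatten, List.map_map, Function.comp_def,
      List.map_congr_left fun p _ => prod_map_elemT_couplingLayer (2 ^ m) p,
      prod_map_layerMatrix_range_reverse, polarMatrix_eq_partialPolar]

/-- The regular polar coupling sequence has exactly `(N/2)·m` elementary
transformations, all of them valid (`a < b < N`), and the product of the
corresponding elementary matrices equals `F^{⊗m}`. -/
theorem polar_matrix_as_coupling_product (m : ℕ) (hm : 1 ≤ m) :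
    (polarCouplings m).length = 2 ^ (m - 1) * m ∧
    (∀ p ∈ polarCouplings m, p.1 < p.2 ∧ p.2 < 2 ^ m) ∧
    ((polarCouplings m).map fun p => elemT (2 ^ m) p.1 p.2).prod = polarMatrix m :=
  polar_matrix_as_coupling_product_general m
end
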